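/- arXiv:1706.09638 — 5 statements merged into one kernel-verified Lean document; each statement's English description precedes it below -/
import Mathlib

section
/- The set 𝒞 of sequences (q_n) of strictly positive rationals with ∑_{n∈ω} q_n ≤ 1, equipped with the product topology where ℚ is discrete, is homeomorphic to the Baire space ω^ω. -/
/- The space 𝒞 of sequences of strictly positive rationals whose sum is at most 1
   (all finite partial sums ≤ 1, which for positive terms is equivalent to ∑ qₙ ≤ 1),
   with ℚ carrying the *discrete* topology and 𝒞 the subspace topology of the
   product topology, is homeomorphic to Baire space ω^ω. -/

/-- A copy of ℚ carrying the discrete topology. -/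
def DiscreteRat : Type := ℚ

instance : TopologicalSpace DiscreteRat := ⊥

/-- The underlying rational of an element of `DiscreteRat`. -/
def DiscreteRat.toRat : DiscreteRat → ℚ := id

/-- The space 𝒞 of strictly positive rational sequences with all partial sums ≤ 1. -/
abbrev CSpace : Type :=
  {q : ℕ → DiscreteRat //
    (∀ n, 0 < (q n).toRat) ∧ ∀ F : Finset ℕ, (∑ n ∈ F, (q n).toRat) ≤ 1}

instance : DiscreteTopology DiscreteRat := ⟨rfl⟩

/-- A bijection between ℕ and the rationals in `(0, r)`, for `r > 0`. -/
noncomputable def erat (r : ℚ) (hr : 0 < r) : ℕ ≃ {q : ℚ // 0 < q ∧ q < r} := by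
  have hinj : Function.Injective
      (fun n : ℕ => (⟨r / (n + 2), by positivity, by
        rw [div_lt_iff₀ (by positivity)]
        nlinarith [hr]⟩ : {q : ℚ // 0 < q ∧ q < r})) := by
    intro a b hab
    have h : r / (a + 2 : ℚ) = r / (b + 2 : ℚ) := congrArg Subtype.val hab
    rw [div_eq_div_iff (by positivity) (by positivity)] at h
    have h2 : ((b : ℚ) + 2) = ((a : ℚ) + 2) := mul_left_cancel₀ (ne_of_gt hr) h
    exact (Nat.cast_injective (by linarith : (a : ℚ) = (b : ℚ))).symm.symm
  have : Infinite {q : ℚ // 0 < q ∧ q < r} := Infinite.of_injective _ hinj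
  letI : Denumerable {q : ℚ // 0 < q ∧ q < r} := Classical.choice (nonempty_denumerable _)
  exact (Denumerable.eqv _).symm

lemma erat_symm_congr {r r' : ℚ} (hr : 0 < r) (hr' : 0 < r') {t t' : ℚ} (hv : 0 < t ∧ t < r)
    (hv' : 0 < t' ∧ t' < r') (h1 : r = r') (h2 : t = t') :
    ((erat r hr).symm ⟨t, hv⟩ : ℕ) = (erat r' hr').symm ⟨t', hv'⟩ := by
  subst h1; subst h2; rfl

/-- One step of the construction: subtract the chosen term from the budget. -/
noncomputable def step (r : {r : ℚ // 0 < r}) (k : ℕ) : {r : ℚ // 0 < r} :=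
  ⟨r.1 - (erat r.1 r.2 k).1, sub_pos.2 (erat r.1 r.2 k).2.2⟩

/-- Remaining budget after choosing the first `n` terms from `x`. -/
noncomputable def budget (x : ℕ → ℕ) : ℕ → {r : ℚ // 0 < r}
  | 0 => ⟨1, one_pos⟩
  | n + 1 => step (budget x n) (x n)

/-- The term chosen at a given budget. -/
noncomputable def pick (r : {r : ℚ // 0 < r}) (k : ℕ) : ℚ := (erat r.1 r.2 k).1

noncomputable def seqF (x : ℕ → ℕ) (n : ℕ) : ℚ := pick (budget x n) (x n)

lemma pick_pos (r : {r : ℚ // 0 < r}) (k : ℕ) : 0 < pick r k := (erat r.1 r.2 k).2.1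

lemma pick_lt (r : {r : ℚ // 0 < r}) (k : ℕ) : pick r k < r.1 := (erat r.1 r.2 k).2.2

lemma erat_symm_pick (r : {r : ℚ // 0 < r}) (k : ℕ) (hv : 0 < pick r k ∧ pick r k < r.1) :
    ((erat r.1 r.2).symm ⟨pick r k, hv⟩ : ℕ) = k := by
  have h : (⟨pick r k, hv⟩ : {q : ℚ // 0 < q ∧ q < r.1}) = erat r.1 r.2 k := Subtype.ext rfl
  rw [h, Equiv.symm_apply_apply]

lemma seqF_pos (x : ℕ → ℕ) (n : ℕ) : 0 < seqF x n := pick_pos _ _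

lemma budget_succ (x : ℕ → ℕ) (n : ℕ) :
    (budget x (n + 1)).1 = (budget x n).1 - seqF x n := rfl

lemma budget_eq (x : ℕ → ℕ) (n : ℕ) :
    (budget x n).1 = 1 - ∑ i ∈ Finset.range n, seqF x i := by
  induction n with
  | zero => simp [budget]
  | succ n ih => rw [budget_succ, ih, Finset.sum_range_succ]; ring

lemma budget_congr (x y : ℕ → ℕ) (n : ℕ) (h : ∀ i, i < n → x i = y i) :
    budget x n = budget y n := by
  induction n with
  | zero => rfl
  | succ n ih =>
    have h1 : budget x n = budget y n := ih fun i hi => h i (hi.trans (Nat.lt_succ_self n))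
    have h2 : x n = y n := h n (Nat.lt_succ_self n)
    show step (budget x n) (x n) = step (budget y n) (y n)
    rw [h1, h2]

lemma seqF_congr (x y : ℕ → ℕ) (n : ℕ) (h : ∀ i, i ≤ n → x i = y i) :
    seqF x n = seqF y n := by
  unfold seqF
  rw [budget_congr x y n fun i hi => h i hi.le, h n le_rfl]

/-- The forward map from Baire space to 𝒞. -/
noncomputable def Fmap (x : ℕ → ℕ) : CSpace := by
  refine ⟨fun n => (seqF x n : DiscreteRat), fun n => seqF_pos x n, fun F => ?_⟩
  obtain ⟨N, hN⟩ := F.exists_nat_subset_range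
  calc (∑ n ∈ F, seqF x n) ≤ ∑ n ∈ Finset.range N, seqF x n :=
        Finset.sum_le_sum_of_subset_of_nonneg hN fun i _ _ => (seqF_pos x i).le
    _ = 1 - (budget x N).1 := by rw [budget_eq]; ring
    _ ≤ 1 := by linarith [(budget x N).2]

/-- The inverse map, as a function of the pair (partial sum, current term). -/
noncomputable def Gaux2 (s t : ℚ) : ℕ :=
  if h : 0 < 1 - s ∧ 0 < t ∧ t < 1 - s then (erat (1 - s) h.1).symm ⟨t, h.2⟩ else 0

noncomputable def Gmap (q : CSpace) (n : ℕ) : ℕ :=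
  Gaux2 (∑ i ∈ Finset.range n, (q.1 i).toRat) ((q.1 n).toRat)

lemma csum_lt (q : CSpace) (n : ℕ) : ∑ i ∈ Finset.range n, (q.1 i).toRat < 1 := by
  have h1 := q.2.2 (Finset.range (n + 1))
  have h2 := q.2.1 n
  rw [Finset.sum_range_succ] at h1
  linarith

lemma Gmap_cond (q : CSpace) (n : ℕ) :
    0 < 1 - ∑ i ∈ Finset.range n, (q.1 i).toRat ∧ 0 < (q.1 n).toRat ∧
      (q.1 n).toRat < 1 - ∑ i ∈ Finset.range n, (q.1 i).toRat := by
  refine ⟨by linarith [csum_lt q n], q.2.1 n, ?_⟩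
  have := csum_lt q (n + 1)
  rw [Finset.sum_range_succ] at this
  linarith

lemma Fmap_sum (x : ℕ → ℕ) (n : ℕ) :
    ∑ i ∈ Finset.range n, ((Fmap x).1 i).toRat = ∑ i ∈ Finset.range n, seqF x i := rfl

lemma Gmap_Fmap (x : ℕ → ℕ) : Gmap (Fmap x) = x := by
  funext n
  have hcond := Gmap_cond (Fmap x) n
  unfold Gmap Gaux2
  rw [dif_pos hcond]
  have hb : 1 - ∑ i ∈ Finset.range n, ((Fmap x).1 i).toRat = (budget x n).1 := by
    rw [Fmap_sum, budget_eq]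
  have ht : ((Fmap x).1 n).toRat = pick (budget x n) (x n) := rfl
  rw [erat_symm_congr hcond.1 (budget x n).2 hcond.2
    ⟨pick_pos _ _, pick_lt _ _⟩ hb ht]
  exact erat_symm_pick _ _ _

lemma budget_Gmap (q : CSpace) (n : ℕ) :
    (budget (Gmap q) n).1 = 1 - ∑ i ∈ Finset.range n, (q.1 i).toRat ∧
      seqF (Gmap q) n = (q.1 n).toRat := by
  induction n with
  | zero =>
    constructor
    · simp [budget]
    · have hcond := Gmap_cond q 0
      have hb : 1 - ∑ i ∈ Finset.range 0, (q.1 i).toRat = (budget (Gmap q) 0).1 := by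
        simp [budget]
      have hx : Gmap q 0 = (erat (budget (Gmap q) 0).1 (budget (Gmap q) 0).2).symm
          ⟨(q.1 0).toRat, hb ▸ hcond.2⟩ := by
        unfold Gmap Gaux2
        rw [dif_pos hcond]
        exact erat_symm_congr hcond.1 (budget (Gmap q) 0).2 hcond.2 (hb ▸ hcond.2) hb rfl
      show pick (budget (Gmap q) 0) (Gmap q 0) = (q.1 0).toRat
      rw [hx]
      exact congrArg Subtype.val (Equiv.apply_symm_apply _ _)
  | succ n ih =>
    have hcond := Gmap_cond q (n + 1)
    have hb : 1 - ∑ i ∈ Finset.range (n + 1), (q.1 i).toRat = (budget (Gmap q) (n + 1)).1 := by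
      rw [budget_succ, ih.1, ih.2, Finset.sum_range_succ]; ring
    refine ⟨hb.symm, ?_⟩
    have hx : Gmap q (n + 1) = (erat (budget (Gmap q) (n+1)).1 (budget (Gmap q) (n+1)).2).symm
        ⟨(q.1 (n+1)).toRat, hb ▸ hcond.2⟩ := by
      unfold Gmap Gaux2
      rw [dif_pos hcond]
      exact erat_symm_congr hcond.1 (budget (Gmap q) (n+1)).2 hcond.2 (hb ▸ hcond.2) hb rfl
    show pick (budget (Gmap q) (n+1)) (Gmap q (n+1)) = (q.1 (n+1)).toRat
    rw [hx]
    exact congrArg Subtype.val (Equiv.apply_symm_apply _ _)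

lemma Fmap_Gmap (q : CSpace) : Fmap (Gmap q) = q := by
  apply Subtype.ext
  funext n
  exact (budget_Gmap q n).2

/-- Continuity of finitely-determined maps out of a discrete product. -/
lemma continuous_finDep {α β : Type*} [TopologicalSpace α] [DiscreteTopology α]
    [TopologicalSpace β] (f : (ℕ → α) → β) (n : ℕ)
    (hf : ∀ x y : ℕ → α, (∀ i, i ≤ n → x i = y i) → f x = f y) : Continuous f := by
  set g : (Fin (n + 1) → α) → β :=
    fun y => f (fun i => if h : i < n + 1 then y ⟨i, h⟩ else y ⟨0, Nat.succ_pos n⟩) with hg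
  have hfg : f = g ∘ fun (x : ℕ → α) (i : Fin (n + 1)) => x i := by
    funext x
    refine hf _ _ fun i hi => ?_
    simp [g, Nat.lt_succ_of_le hi]
  rw [hfg]
  exact (continuous_of_discreteTopology (α := Fin (n + 1) → α)).comp
    (continuous_pi fun i => continuous_apply (i : ℕ))

noncomputable def FmapFun (x : ℕ → ℕ) (n : ℕ) : DiscreteRat := seqF x n

lemma continuous_FmapFun : Continuous FmapFun := by
  apply continuous_pi
  intro n
  exact continuous_finDep (β := DiscreteRat) (fun x => FmapFun x n) n
    (fun x y h => seqF_congr x y n h)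

lemma continuous_Fmap : Continuous Fmap :=
  Continuous.subtype_mk continuous_FmapFun _

lemma continuous_Gmap : Continuous Gmap := by
  apply continuous_pi
  intro n
  have h1 : Continuous (fun y : ℕ → DiscreteRat =>
      Gaux2 (∑ i ∈ Finset.range n, (y i).toRat) ((y n).toRat)) := by
    refine continuous_finDep _ n fun x y h => ?_
    rw [Finset.sum_congr rfl fun i hi =>
      congrArg DiscreteRat.toRat (h i (Finset.mem_range.1 hi).le), h n le_rfl]
  exact h1.comp continuous_subtype_val

theorem cspace_homeomorphic_baire : Nonempty (CSpace ≃ₜ (ℕ → ℕ)) := by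
  exact ⟨{ toFun := Gmap, invFun := Fmap, left_inv := Fmap_Gmap, right_inv := Gmap_Fmap,
           continuous_toFun := continuous_Gmap, continuous_invFun := continuous_Fmap }⟩
end

section
/- cov(𝒩) ≤ 𝔟₂, where 𝔟₂ is the least size of an R₂-unbounded family 𝒢 ⊆ 2^ω, i.e. a family such that no single f ∈ 2^ω eventually interval-matches-avoids all members of 𝒢; indeed, if for g ∈ 𝒢 the null set N_g is defined as the set of f ∈ 2^ω with infinitely many interval agreements with g, then any R₂-unbounded family 𝒢 yields a covering of 2^ω by the null sets {N_g : g ∈ 𝒢}, hence the covering number of the null ideal is at most the R₂-unbounding number. -/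
open MeasureTheory

/- cov(𝒩) ≤ 𝔟₂.  Here (Iₙ) is the interval partition of ω with |Iₙ| = 2^(n+1),
   g R₂ f iff g↾Iₙ ≠ f↾Iₙ for all but finitely many n, 𝒢 ⊆ 2^ω is R₂-unbounded
   if no single f satisfies g R₂ f for all g ∈ 𝒢, and cov(𝒩) is the least number
   of null sets (w.r.t. the uniform measure μ on 2^ω, characterized by its values
   on cylinders) needed to cover 2^ω.  The claim:
   cov(𝒩) ≤ min{|𝒢| : 𝒢 is R₂-unbounded} = 𝔟₂. -/

def intervalStart (n : ℕ) : ℕ := 2 ^ (n + 1) - 2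

def agreesOnBlock (f g : ℕ → Bool) (n : ℕ) : Prop :=
  ∀ k ∈ Set.Ico (intervalStart n) (intervalStart n + 2 ^ (n + 1)), f k = g k

/-- The relation R₂: eventually, `g` and `f` differ on every interval `Iₙ`. -/
def R2 (g f : ℕ → Bool) : Prop :=
  ∀ᶠ n in Filter.atTop, ¬ agreesOnBlock g f n

lemma block_measure_le
    (μ : Measure (ℕ → Bool))
    (hcyl : ∀ (n : ℕ) (s : ℕ → Bool),
      μ {f : ℕ → Bool | ∀ i < n, f i = s i} = (1 / 2 : ENNReal) ^ n)
    (g : ℕ → Bool) (n : ℕ) :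
    μ {f | agreesOnBlock g f n} ≤ (1 / 2 : ENNReal) ^ (2 ^ (n + 1)) := by
  set a := intervalStart n with ha
  set L := 2 ^ (n + 1) with hL
  have hsub : {f | agreesOnBlock g f n} ⊆
      ⋃ v : Fin a → Bool, {f : ℕ → Bool | ∀ i < a + L,
        f i = (fun i => if h : i < a then v ⟨i, h⟩ else g i) i} := by
    intro f hf
    refine Set.mem_iUnion.2 ⟨fun i => f i, ?_⟩
    intro i hi
    by_cases h : i < a
    · simp [h]
    · simp only [h, dif_neg, not_false_iff]
      exact (hf i ⟨Nat.le_of_not_lt h, hi⟩).symm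
  calc μ {f | agreesOnBlock g f n}
      ≤ ∑' v : Fin a → Bool, μ {f : ℕ → Bool | ∀ i < a + L,
        f i = (fun i => if h : i < a then v ⟨i, h⟩ else g i) i} :=
        (measure_mono hsub).trans (measure_iUnion_le _)
    _ = ∑' _ : Fin a → Bool, (1 / 2 : ENNReal) ^ (a + L) := by
        congr 1; funext v; exact hcyl _ _
    _ = (2 : ENNReal) ^ a * (1 / 2 : ENNReal) ^ (a + L) := by
        rw [tsum_fintype, Finset.sum_const, Finset.card_univ, Fintype.card_fun, nsmul_eq_mul]
        simp only [Fintype.card_bool, Fintype.card_fin]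
        push_cast
        ring
    _ = (1 / 2 : ENNReal) ^ L := by
        rw [pow_add, ← mul_assoc, ← mul_pow]
        norm_num
        rw [ENNReal.mul_inv_cancel (by norm_num) (by norm_num)]
        simp

lemma null_Ng
    (μ : Measure (ℕ → Bool))
    (hcyl : ∀ (n : ℕ) (s : ℕ → Bool),
      μ {f : ℕ → Bool | ∀ i < n, f i = s i} = (1 / 2 : ENNReal) ^ n)
    (g : ℕ → Bool) :
    μ {f | ¬ R2 g f} = 0 := by
  have heq : {f | ¬ R2 g f} = Filter.limsup (fun n => {f | agreesOnBlock g f n}) Filter.atTop := by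
    ext f
    rw [Filter.mem_limsup_iff_frequently_mem]
    simp [R2, Filter.not_eventually, Set.mem_setOf_eq, Filter.frequently_atTop]
  rw [heq]
  apply measure_limsup_atTop_eq_zero
  have h1 : ∑' n, μ {f | agreesOnBlock g f n} ≤ ∑' n, (1 / 2 : ENNReal) ^ (n + 1) := by
    apply ENNReal.tsum_le_tsum
    intro n
    refine (block_measure_le μ hcyl g n).trans ?_
    exact pow_le_pow_of_le_one (by norm_num) (by norm_num) (Nat.lt_two_pow_self (n := n + 1)).le
  refine ne_top_of_le_ne_top ?_ h1
  have h2 : ∑' n, (1 / 2 : ENNReal) ^ (n + 1) ≤ ∑' n, (1 / 2 : ENNReal) ^ n :=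
    ENNReal.tsum_le_tsum fun n => pow_le_pow_of_le_one (by norm_num) (by norm_num) n.le_succ
  refine ne_top_of_le_ne_top ?_ h2
  rw [ENNReal.tsum_geometric, one_div, ENNReal.one_sub_inv_two]
  exact ENNReal.inv_ne_top.2 (by norm_num)

theorem covNull_le_b2
    (μ : Measure (ℕ → Bool))
    (hcyl : ∀ (n : ℕ) (s : ℕ → Bool),
      μ {f : ℕ → Bool | ∀ i < n, f i = s i} = (1 / 2 : ENNReal) ^ n) :
    sInf {c : Cardinal | ∃ F : Set (Set (ℕ → Bool)),
        Cardinal.mk F = c ∧ (∀ N ∈ F, μ N = 0) ∧ ⋃₀ F = Set.univ}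
      ≤ sInf {c : Cardinal | ∃ G : Set (ℕ → Bool),
        Cardinal.mk G = c ∧ ∀ f : ℕ → Bool, ∃ g ∈ G, ¬ R2 g f} := by
  have hne : {c : Cardinal | ∃ G : Set (ℕ → Bool),
        Cardinal.mk G = c ∧ ∀ f : ℕ → Bool, ∃ g ∈ G, ¬ R2 g f}.Nonempty := by
    refine ⟨_, Set.univ, rfl, fun f => ⟨f, Set.mem_univ f, ?_⟩⟩
    simp only [R2, Filter.not_eventually, not_not]
    exact Filter.Frequently.of_forall fun n k _ => rfl
  refine le_csInf hne ?_
  rintro c ⟨G, rfl, hG⟩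
  set F : Set (Set (ℕ → Bool)) := (fun g => {f | ¬ R2 g f}) '' G with hF
  have hmem : Cardinal.mk F ∈ {c : Cardinal | ∃ F : Set (Set (ℕ → Bool)),
        Cardinal.mk F = c ∧ (∀ N ∈ F, μ N = 0) ∧ ⋃₀ F = Set.univ} := by
    refine ⟨F, rfl, ?_, ?_⟩
    · rintro N ⟨g, -, rfl⟩
      exact null_Ng μ hcyl g
    · ext f
      simp only [Set.mem_sUnion, Set.mem_univ, iff_true]
      obtain ⟨g, hg, hgf⟩ := hG f
      exact ⟨{f | ¬ R2 g f}, ⟨g, hg, rfl⟩, hgf⟩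
  exact (csInf_le (OrderBot.bddBelow _) hmem).trans (Cardinal.mk_image_le)
end

section
/- Let j : V → M be a Boolean-ultrapower elementary embedding with critical point κ such that M is closed under <κ-sequences and every element of j(S) is determined by a labeled antichain of size κ (a 'mixture of κ many possibilities' from S). If (S, ≺) is a <λ-directed partial order with κ < λ, then j''S is cofinal in j(S). -/
universe u

/- Let j : V → M be a Boolean-ultrapower elementary embedding with critical point
   κ, M closed under <κ-sequences, such that every element of j(S) is a mixture
   of κ many possibilities from S: it has the form [x] for a labeled antichain
   x of size ≤ κ with values in S, and whenever t ∈ S lies above all the labels,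
   the element is below j(t).  If (S, ≼) is a <λ-directed partial order and κ < λ,
   then j''S is cofinal in j(S).  (Here T plays the role of j(S).) -/

theorem image_cofinal_in_ultrapower_of_directed
    {S T : Type u} [Preorder S] [Preorder T]
    (κ lam : Cardinal.{u}) (hkappa_lt : κ < lam)
    (j : S → T)
    -- j is an order embedding of S into j(S) (from elementarity):
    (hj : ∀ s s' : S, s ≤ s' ↔ j s ≤ j s')
    -- S is <λ-directed:
    (hdir : ∀ A : Set S, Cardinal.mk A < lam → ∃ ub : S, ∀ a ∈ A, a ≤ ub)
    -- every element of T = j(S) is a mixture of ≤ κ many possibilities from S: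
    (hmix : ∀ b : T, ∃ (ι : Type u) (xs : ι → S), Cardinal.mk ι ≤ κ ∧
      ∀ t : S, (∀ i : ι, xs i ≤ t) → b ≤ j t) :
    -- then j''S is cofinal in j(S):
    ∀ b : T, ∃ s : S, b ≤ j s := by
  intro b
  obtain ⟨ι, xs, hcard, hub⟩ := hmix b
  have hlt : Cardinal.mk (Set.range xs) < lam :=
    lt_of_le_of_lt (le_trans Cardinal.mk_range_le hcard) hkappa_lt
  obtain ⟨ub, hub'⟩ := hdir (Set.range xs) hlt
  exact ⟨ub, hub ub fun i => hub' _ ⟨i, rfl⟩⟩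
end

section
/- With j as in the Boolean ultrapower by U on B_{κ,θ} (adding θ Cohen subsets of κ, κ strongly compact, θ > κ regular, GCH): if α is an ordinal with cf(α) ≠ κ, then j''α is cofinal in j(α), and hence cf(j(α)) = cf(α). -/
universe u

/- In the Boolean ultrapower by U on B = B_{κ,θ} (κ strongly compact, θ > κ
   regular, GCH; B is κ⁺-cc and U is κ-complete): if α is an ordinal with
   cf(α) ≠ κ, then j''α is cofinal in j(α) (and hence cf(j(α)) = cf(α)).
   Elements of j(α) are (classes of) BUP-names for ordinals < α, i.e. maximal
   antichains of B labeled with ordinals < α; cofinality of j''α in j(α) says: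
   for every such name x there is β < α with ⟦x ≤ β̌⟧ = ⨆{a ∈ A : x(a) ≤ β} ∈ U. -/

/-- An ultrafilter on a Boolean algebra `B`, as a set of elements. -/
def IsBUltrafilter {B : Type u} [CompleteBooleanAlgebra B] (U : Set B) : Prop :=
  ⊤ ∈ U ∧ ⊥ ∉ U ∧ (∀ a b : B, a ∈ U → a ≤ b → b ∈ U) ∧
    (∀ a b : B, a ∈ U → b ∈ U → a ⊓ b ∈ U) ∧ (∀ b : B, b ∈ U ∨ bᶜ ∈ U)

theorem image_cofinal_of_cof_ne_kappa
    {B : Type u} [CompleteBooleanAlgebra B] (κ : Cardinal.{u})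
    (hreg : κ.IsRegular)
    -- B is κ⁺-cc:
    (hcc : ∀ A : Set B, ⊥ ∉ A → (A.Pairwise fun a b => a ⊓ b = ⊥) →
      Cardinal.mk A ≤ κ)
    -- U is a κ-complete ultrafilter on B:
    (U : Set B) (hU : IsBUltrafilter U)
    (hUk : ∀ S : Set B, S ⊆ U → Cardinal.mk S < κ → sInf S ∈ U)
    -- α is an ordinal with cf(α) ≠ κ:
    (α : Ordinal.{u}) (hcof : α.cof ≠ κ)
    -- x = (A, v) is a BUP-name for an ordinal < α:
    (A : Set B) (hbot : ⊥ ∉ A) (hanti : A.Pairwise fun a b => a ⊓ b = ⊥)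
    (hmax : sSup A = ⊤) (v : A → Ordinal.{u}) (hv : ∀ a : A, v a < α) :
    -- then the name is U-bounded by some standard name β̌ with β < α:
    ∃ β : Ordinal.{u}, β < α ∧ (⨆ (a : A) (_ : v a ≤ β), (a : B)) ∈ U := by
  obtain ⟨hT, hB, hup, hinter, hultra⟩ := hU
  rcases lt_or_gt_of_ne hcof with hlt | hgt
  · -- cf α < κ : use a cofinal family of size cf α and κ-completeness
    obtain ⟨ι, f, hlsub, hι⟩ := Ordinal.exists_lsub_cof α
    set s : ι → B := fun i => ⨆ (a : A) (_ : v a ≤ f i), (a : B) with hs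
    by_cases h : ∃ i, s i ∈ U
    · obtain ⟨i, hi⟩ := h
      exact ⟨f i, hlsub ▸ Ordinal.lt_lsub f i, hi⟩
    · push_neg at h
      exfalso
      have hco : ∀ i, (s i)ᶜ ∈ U := fun i => (hultra (s i)).resolve_left (h i)
      have hsub : Set.range (fun i => (s i)ᶜ) ⊆ U := by
        rintro _ ⟨i, rfl⟩; exact hco i
      have hcard : Cardinal.mk (Set.range (fun i => (s i)ᶜ)) < κ :=
        lt_of_le_of_lt Cardinal.mk_range_le (hι ▸ hlt)
      have hmem := hUk _ hsub hcard
      have htop : (⨆ i, s i) = ⊤ := by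
        refine eq_top_iff.2 (hmax ▸ sSup_le fun a ha => ?_)
        have hva : v ⟨a, ha⟩ < Ordinal.lsub f := by rw [hlsub]; exact hv ⟨a, ha⟩
        obtain ⟨i, hvi⟩ := Ordinal.lt_lsub_iff.1 hva
        calc a ≤ s i := le_iSup_of_le ⟨a, ha⟩ (le_iSup_of_le hvi le_rfl)
          _ ≤ ⨆ i, s i := le_iSup s i
      have : sInf (Set.range (fun i => (s i)ᶜ)) = ⊥ := by
        rw [sInf_range, ← compl_iSup, htop, compl_top]
      exact hB (this ▸ hmem)
  · -- cf α > κ : the sup of the values is below α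
    have hA : Cardinal.mk A ≤ κ := hcc A hbot hanti
    have hβ : (⨆ a : A, v a) < α :=
      Ordinal.iSup_lt_ord (lt_of_le_of_lt hA hgt) hv
    refine ⟨⨆ a : A, v a, hβ, ?_⟩
    have : (⨆ (a : A) (_ : v a ≤ ⨆ a : A, v a), (a : B)) = ⊤ := by
      refine eq_top_iff.2 (hmax ▸ sSup_le fun a ha => ?_)
      exact le_iSup_of_le ⟨a, ha⟩
        (le_iSup_of_le (Ordinal.le_iSup v ⟨a, ha⟩) le_rfl)
    rw [this]; exact hT
end

section
/- In the Cohen forcing P_{κ,θ} (partial functions θ → κ of size < κ, κ regular uncountable) with generic function f*: for any μ < κ suitable pairs (x_i, δ_i)_{i<μ} — where x_i is an antichain of size ≤ κ labeled with ordinals < κ and δ_i ∈ θ exceeds sup of supports of all conditions in the antichain of x_i — the conditions b_{x_i,δ_i} = ⟦f*(δ_i) > x_i⟧ have a common nonzero lower bound; hence the collection of all such b_{x,δ} generates a κ-complete filter on the completion B_{κ,θ}. -/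
universe u

/- In the Cohen forcing P_{κ,θ} (partial functions θ → κ with domain of size < κ,
   κ regular uncountable — strongly compact in the paper —, θ > κ) with generic
   function f*: for any μ < κ many suitable pairs (x_i, δ_i) — where x_i is a
   P_{κ,θ}-name for an ordinal < κ given by an antichain of size ≤ κ labeled with
   ordinals < κ which is a maximal antichain (predense), and δ_i < θ exceeds the
   supports of all conditions of that antichain — the Boolean values
   b_{x_i,δ_i} = ⟦f*(δ_i) > x_i⟧ have a common nonzero lower bound; hence the
   collection of all such b_{x,δ} generates a κ-complete filter on B_{κ,θ}.
   We express the common lower bound concretely as a condition q which, for each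
   i, extends some member a of the antichain of x_i (thus deciding x_i to be its
   label) and satisfies q(δ_i) > label(a); such a q satisfies q ≤ b_{x_i,δ_i}
   for every i. -/

/-- A condition of `P_{κ,θ}`: a partial function from `θ` to `κ` with support of
size `< κ` (coordinates are ordinals `< θ`, values ordinals `< κ.ord`). -/
def CohenCond (κ : Cardinal.{u}) (θ : Ordinal.{u}) : Type (u + 1) :=
  {p : Ordinal.{u} → Option Ordinal.{u} //
    (∀ δ, p δ ≠ none → δ < θ) ∧
    Cardinal.mk {δ : Ordinal.{u} | p δ ≠ none} < Cardinal.lift.{u + 1} κ ∧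
    ∀ δ o, p δ = some o → o < κ.ord}

/-- `q` extends `p` (i.e. `q ≤ p` in the Cohen forcing). -/
def CohenExt {κ : Cardinal.{u}} {θ : Ordinal.{u}}
    (q p : CohenCond κ θ) : Prop :=
  ∀ δ o, p.1 δ = some o → q.1 δ = some o

/- Visit the antichains by increasing `δ i` and at stage `i` choose `a i ∈ A i` compatible with
all earlier choices and with the assignments `δ k ↦ sup {lab a_j + 1 : δ j = δ k}` for the
`δ k < δ i`. Since `a i` lives below `δ i`, it never meets the coordinates assigned later, so all
the chosen conditions and assignments agree pairwise; by regularity of `κ` these fewer than `κ`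
partial functions glue to one condition, the required lower bound. -/

noncomputable section

open Cardinal

theorem Cardinal.IsRegular.one_lt {κ : Cardinal.{u}} (hκ : κ.IsRegular) : 1 < κ :=
  one_lt_aleph0.trans_le hκ.aleph0_le

namespace CohenCond

variable {κ : Cardinal.{u}} {θ : Ordinal.{u}}

/-- Two conditions are compatible iff they agree on their common domain. -/
def Agree (p q : CohenCond κ θ) : Prop :=
  ∀ γ v w, p.1 γ = some v → q.1 γ = some w → v = w

theorem Agree.refl (p : CohenCond κ θ) : p.Agree p := fun _ _ _ hv hw =>
  Option.some.inj (hv.symm.trans hw)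

theorem Agree.symm {p q : CohenCond κ θ} (h : p.Agree q) : q.Agree p := fun γ v w hv hw =>
  (h γ w v hw hv).symm

theorem agree_of_cohenExt {r p q : CohenCond κ θ} (hp : CohenExt r p) (hq : CohenExt r q) :
    p.Agree q := fun γ v w hv hw =>
  Option.some.inj ((hp γ v hv).symm.trans (hq γ w hw))

theorem Agree.of_cohenExt {p s q : CohenCond κ θ} (h : p.Agree s) (hs : CohenExt s q) :
    p.Agree q := fun γ v w hv hw => h γ v w hv (hs γ w hw)

def empty (hκ : 0 < κ) : CohenCond κ θ :=
  ⟨fun _ => none, fun _ h => absurd rfl h, by simpa using hκ, fun _ _ h => nomatch h⟩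

/-- The condition `{γ ↦ v}`, or the empty condition when `γ ≥ θ` or `v ≥ κ`. -/
def single (hκ : 1 < κ) (γ v : Ordinal.{u}) : CohenCond κ θ := by
  refine ⟨fun β => if β = γ ∧ γ < θ ∧ v < κ.ord then some v else none, ?_, ?_, ?_⟩
  · intro β h
    by_cases hβ : β = γ ∧ γ < θ ∧ v < κ.ord
    · exact hβ.1 ▸ hβ.2.1
    · simp [hβ] at h
  · refine (mk_le_mk_of_subset (t := {γ}) fun β h => ?_).trans_lt ?_
    · by_contra hβ
      simp_all
    · simpa using hκ
  · intro β o h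
    dsimp only at h
    split_ifs at h with hβ
    exact Option.some.inj h ▸ hβ.2.2

theorem single_apply_self (hκ : 1 < κ) {γ v : Ordinal.{u}} (hγ : γ < θ) (hv : v < κ.ord) :
    (single (θ := θ) hκ γ v).1 γ = some v :=
  if_pos ⟨rfl, hγ, hv⟩

theorem eq_of_single_apply_eq_some (hκ : 1 < κ) {γ v β w : Ordinal.{u}}
    (h : (single (θ := θ) hκ γ v).1 β = some w) : β = γ ∧ w = v := by
  simp only [single] at h
  split_ifs at h with hβ
  exact ⟨hβ.1, (Option.some.inj h).symm⟩

theorem agree_single_of_eq_none (hκ : 1 < κ) {p : CohenCond κ θ} {γ : Ordinal.{u}}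
    (hp : p.1 γ = none) (v : Ordinal.{u}) : p.Agree (single hκ γ v) := by
  intro β w w' hw hw'
  obtain ⟨rfl, -⟩ := eq_of_single_apply_eq_some hκ hw'
  simp [hp] at hw

theorem single_agree_single (hκ : 1 < κ) (f : Ordinal.{u} → Ordinal.{u}) (γ γ' : Ordinal.{u}) :
    (single (θ := θ) hκ γ (f γ)).Agree (single hκ γ' (f γ')) := by
  intro β w w' hw hw'
  obtain ⟨rfl, rfl⟩ := eq_of_single_apply_eq_some hκ hw
  obtain ⟨h, rfl⟩ := eq_of_single_apply_eq_some hκ hw'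
  rw [h]

/-- On overlaps the value of an arbitrarily chosen member is taken, so this is a common
extension of `F` only when its members pairwise agree. -/
def glue (hκ : κ.IsRegular) {J : Type u} (hJ : #J < κ) (F : J → CohenCond κ θ) :
    CohenCond κ θ := by
  classical
  refine ⟨fun γ => if h : ∃ j, (F j).1 γ ≠ none then (F h.choose).1 γ else none, ?_, ?_, ?_⟩
  · intro γ h
    dsimp only at h
    split_ifs at h with hγ
    · exact (F hγ.choose).2.1 γ h
    · exact absurd rfl h
  · have hsub : {γ | (if h : ∃ j, (F j).1 γ ≠ none then (F h.choose).1 γ else none) ≠ none} ⊆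
        ⋃ j : ULift.{u + 1} J, {γ | (F j.down).1 γ ≠ none} := fun γ h => by
      by_cases hγ : ∃ j, (F j).1 γ ≠ none
      · obtain ⟨j, hj⟩ := hγ
        exact Set.mem_iUnion.2 ⟨⟨j⟩, hj⟩
      · exact absurd (dif_neg hγ) h
    refine (mk_le_mk_of_subset hsub).trans_lt ?_
    rw [card_iUnion_lt_iff_forall_of_isRegular hκ.lift (by simpa using hJ)]
    exact fun j => (F j.down).2.2.1
  · intro γ o h
    dsimp only at h
    split_ifs at h with hγ
    exact (F hγ.choose).2.2.2 γ o h

theorem cohenExt_glue (hκ : κ.IsRegular) {J : Type u} (hJ : #J < κ) {F : J → CohenCond κ θ}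
    (hF : ∀ j j', (F j).Agree (F j')) (j : J) : CohenExt (glue hκ hJ F) (F j) := by
  classical
  intro γ o h
  have hγ : ∃ j, (F j).1 γ ≠ none := ⟨j, by simp [h]⟩
  obtain ⟨w, hw⟩ := Option.ne_none_iff_exists'.1 hγ.choose_spec
  change (if h : ∃ j, (F j).1 γ ≠ none then (F h.choose).1 γ else none) = some o
  rw [dif_pos hγ, hw, hF _ j γ w o hw h]

end CohenCond

section Construction

open CohenCond

variable {κ : Cardinal.{u}} {θ : Ordinal.{u}} {ι : Type u} (δ : ι → Ordinal.{u})

/-- The antichains are visited by increasing `δ`, ties broken by a fixed well-ordering of `ι`. -/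
def Precedes : ι → ι → Prop :=
  (Prod.Lex (· < ·) WellOrderingRel).onFun fun i => (δ i, i)

instance isWellOrder_precedes : IsWellOrder ι (Precedes δ) :=
  Function.Injective.isWellOrder (f := fun i => (δ i, i)) _ fun _ _ h => congrArg Prod.snd h

variable {δ} in
theorem precedes_of_lt {i j : ι} (h : δ j < δ i) : Precedes δ j i :=
  Prod.Lex.left _ _ h

/-- The members of `family` that the choice made at stage `i` has to respect. -/
def Visible (i : ι) : ι ⊕ ι → Prop
  | .inl j => Precedes δ j i
  | .inr k => δ k < δ i

variable (lab : ι → CohenCond κ θ → Ordinal.{u})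

def supLabel (b : ι → CohenCond κ θ) (γ : Ordinal.{u}) : Ordinal.{u} :=
  ⨆ k : {k // δ k = γ}, lab k.1 (b k.1) + 1

theorem supLabel_lt {b : ι → CohenCond κ θ} (hreg : κ.IsRegular) (hι : #ι < κ)
    (hb : ∀ k, lab k (b k) < κ.ord) (γ : Ordinal.{u}) : supLabel δ lab b γ < κ.ord :=
  Ordinal.iSup_add_one_lt_of_lt_cof (by rw [hreg.cof_ord]; exact (mk_subtype_le _).trans_lt hι)
    fun k => hb k.1

/-- The conditions `b k` together with the one-point conditions `{δ k ↦ supLabel b (δ k)}`. -/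
def family (hκ : 1 < κ) (b : ι → CohenCond κ θ) : ι ⊕ ι → CohenCond κ θ :=
  Sum.elim b fun k => single hκ (δ k) (supLabel δ lab b (δ k))

def Respects (hκ : 1 < κ) (b : ι → CohenCond κ θ) (i : ι) : Prop :=
  ∀ x, Visible δ i x → (b i).Agree (family δ lab hκ b x)

variable {δ lab}

theorem agree_family_inr (hκ : 1 < κ) {b : ι → CohenCond κ θ}
    (hb : ∀ j γ, (b j).1 γ ≠ none → γ < δ j) {j : ι} (hj : Respects δ lab hκ b j) (k : ι) :
    (b j).Agree (family δ lab hκ b (.inr k)) := by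
  by_cases h : δ k < δ j
  · exact hj (.inr k) h
  · exact agree_single_of_eq_none hκ (not_not.1 fun hne => h (hb j _ hne)) _

theorem family_agree (hκ : 1 < κ) {b : ι → CohenCond κ θ}
    (hb : ∀ j γ, (b j).1 γ ≠ none → γ < δ j) {x y : ι ⊕ ι}
    (hx : ∀ j, x = .inl j → Respects δ lab hκ b j) (hy : ∀ j, y = .inl j → Respects δ lab hκ b j) :
    (family δ lab hκ b x).Agree (family δ lab hκ b y) := by
  rcases x with j | k <;> rcases y with j' | k'
  · rcases trichotomous_of (Precedes δ) j j' with h | rfl | h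
    · exact (hy j' rfl (.inl j) h).symm
    · exact .refl _
    · exact hx j rfl (.inl j') h
  · exact agree_family_inr hκ hb (hx j rfl) k'
  · exact (agree_family_inr hκ hb (hy j' rfl) k).symm
  · exact single_agree_single hκ _ _ _

theorem mk_sum_self_lt (hκ : aleph0 ≤ κ) (hι : #ι < κ) : #(ι ⊕ ι) < κ := by
  simpa using add_lt_of_lt hκ hι hι

variable (δ lab)

def stage (hreg : κ.IsRegular) (hι : #ι < κ) (i : ι) (b : ι → CohenCond κ θ) : CohenCond κ θ :=
  glue hreg ((mk_subtype_le _).trans_lt (mk_sum_self_lt hreg.aleph0_le hι))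
    fun x : {x // Visible δ i x} => family δ lab hreg.one_lt b x

theorem stage_congr (hreg : κ.IsRegular) (hι : #ι < κ) (i : ι) {b b' : ι → CohenCond κ θ}
    (h : ∀ j, Precedes δ j i → b j = b' j) :
    stage δ lab hreg hι i b = stage δ lab hreg hι i b' := by
  have hsup : ∀ k, δ k < δ i → supLabel δ lab b (δ k) = supLabel δ lab b' (δ k) := fun k hk => by
    simp only [supLabel]
    congr! 2 with ⟨k', hk'⟩
    rw [h k' (precedes_of_lt (hk' ▸ hk))]
  simp only [stage]
  congr! 2 with ⟨j | k, hx⟩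
  · exact h j hx
  · simp only [family, Sum.elim_inr, hsup k hx]

variable {A : ι → Set (CohenCond κ θ)}
  (hpredense : ∀ i, ∀ q : CohenCond κ θ, ∃ a ∈ A i, ∃ r, CohenExt r a ∧ CohenExt r q)

open Classical in
/-- Stage `i` picks a member of `A i` compatible with `stage i`, built from earlier stages. -/
def seq (hreg : κ.IsRegular) (hι : #ι < κ) : ι → CohenCond κ θ :=
  IsWellFounded.fix (Precedes δ) fun i ih =>
    (hpredense i (stage δ lab hreg hι i fun j =>
      if h : Precedes δ j i then ih j h else empty hreg.pos)).choose

open Classical in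
theorem seq_spec (hreg : κ.IsRegular) (hι : #ι < κ) (i : ι) :
    seq δ lab hpredense hreg hι i ∈ A i ∧ ∃ r, CohenExt r (seq δ lab hpredense hreg hι i) ∧
      CohenExt r (stage δ lab hreg hι i (seq δ lab hpredense hreg hι)) := by
  rw [seq, IsWellFounded.fix_eq, ← seq]
  rw [← stage_congr δ lab hreg hι i (b := fun j => if h : Precedes δ j i then
    seq δ lab hpredense hreg hι j else empty hreg.pos) fun j hj => dif_pos hj]
  exact (hpredense i _).choose_spec

theorem respects_seq (hreg : κ.IsRegular) (hι : #ι < κ)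
    (hsupp : ∀ i, ∀ a ∈ A i, ∀ γ : Ordinal.{u}, a.1 γ ≠ none → γ < δ i) (i : ι) :
    Respects δ lab hreg.one_lt (seq δ lab hpredense hreg hι) i := by
  refine IsWellFounded.induction (Precedes δ) i fun i ih => ?_
  obtain ⟨-, r, hr, hrs⟩ := seq_spec δ lab hpredense hreg hι i
  have hagree (y z : {x // Visible δ i x}) :
      (family δ lab _ (seq δ lab hpredense hreg hι) y).Agree (family δ lab _ _ z) :=
    family_agree _ (fun j => hsupp j _ (seq_spec δ lab hpredense hreg hι j).1)
      (fun j hj => ih j (hj ▸ y.2 :)) (fun j hj => ih j (hj ▸ z.2 :))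
  exact fun x hx => (agree_of_cohenExt hr hrs).of_cohenExt (cohenExt_glue _ _ hagree ⟨x, hx⟩)

end Construction

theorem cohen_suitable_pairs_compatible_general
    (κ : Cardinal.{u}) (hreg : κ.IsRegular)
    (θ : Ordinal.{u})
    -- μ < κ many suitable pairs (x_i, δ_i):
    (ι : Type u) (hι : Cardinal.mk ι < κ)
    (A : ι → Set (CohenCond κ θ)) (lab : ∀ i, CohenCond κ θ → Ordinal.{u})
    (δ : ι → Ordinal.{u}) (hδθ : ∀ i, δ i < θ)
    -- each x_i is given by a maximal antichain of size ≤ κ: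
    (hpredense : ∀ i, ∀ q : CohenCond κ θ, ∃ a ∈ A i, ∃ r, CohenExt r a ∧ CohenExt r q)
    -- labeled with ordinals < κ:
    (hlab : ∀ i, ∀ a ∈ A i, lab i a < κ.ord)
    -- suitability: δ_i exceeds the supports of all conditions in the antichain:
    (hsupp : ∀ i, ∀ a ∈ A i, ∀ γ : Ordinal.{u}, a.1 γ ≠ none → γ < δ i) :
    -- then there is a common lower bound q of the b_{x_i,δ_i}:
    ∃ q : CohenCond κ θ, ∀ i : ι, ∃ a ∈ A i, CohenExt q a ∧
      ∃ v : Ordinal.{u}, q.1 (δ i) = some v ∧ lab i a < v := by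
  set a := seq δ lab hpredense hreg hι
  have ha (i : ι) : a i ∈ A i := (seq_spec δ lab hpredense hreg hι i).1
  have hres (j : ι) := respects_seq δ lab hpredense hreg hι hsupp j
  have hagree (x y : ι ⊕ ι) : (family δ lab _ a x).Agree (family δ lab _ a y) :=
    family_agree _ (fun j => hsupp j _ (ha j)) (fun j _ => hres j) (fun j _ => hres j)
  have hq := CohenCond.cohenExt_glue hreg (mk_sum_self_lt hreg.aleph0_le hι) hagree
  have hsup_lt := supLabel_lt δ lab hreg hι fun k => hlab k _ (ha k)
  refine ⟨_, fun i => ⟨a i, ha i, hq (.inl i), supLabel δ lab a (δ i), ?_, ?_⟩⟩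
  · exact hq (.inr i) _ _ (CohenCond.single_apply_self hreg.one_lt (hδθ i) (hsup_lt _))
  · exact Ordinal.lt_iSup_add_one (fun k : {k // δ k = δ i} => lab k.1 (a k.1)) ⟨i, rfl⟩

theorem cohen_suitable_pairs_compatible
    (κ : Cardinal.{u}) (hreg : κ.IsRegular) (hunc : Cardinal.aleph0 < κ)
    (θ : Ordinal.{u}) (hθ : κ.ord < θ)
    -- μ < κ many suitable pairs (x_i, δ_i):
    (ι : Type u) (hι : Cardinal.mk ι < κ)
    (A : ι → Set (CohenCond κ θ)) (lab : ∀ i, CohenCond κ θ → Ordinal.{u})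
    (δ : ι → Ordinal.{u}) (hδθ : ∀ i, δ i < θ)
    -- each x_i is given by a maximal antichain of size ≤ κ:
    (hanti : ∀ i, (A i).Pairwise fun p q => ¬ ∃ r, CohenExt r p ∧ CohenExt r q)
    (hpredense : ∀ i, ∀ q : CohenCond κ θ, ∃ a ∈ A i, ∃ r, CohenExt r a ∧ CohenExt r q)
    (hsize : ∀ i, Cardinal.mk (A i) ≤ Cardinal.lift.{u + 1} κ)
    -- labeled with ordinals < κ:
    (hlab : ∀ i, ∀ a ∈ A i, lab i a < κ.ord)
    -- suitability: δ_i exceeds the supports of all conditions in the antichain: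
    (hsupp : ∀ i, ∀ a ∈ A i, ∀ γ : Ordinal.{u}, a.1 γ ≠ none → γ < δ i) :
    -- then there is a common lower bound q of the b_{x_i,δ_i}:
    ∃ q : CohenCond κ θ, ∀ i : ι, ∃ a ∈ A i, CohenExt q a ∧
      ∃ v : Ordinal.{u}, q.1 (δ i) = some v ∧ lab i a < v :=
  cohen_suitable_pairs_compatible_general κ hreg θ ι hι A lab δ hδθ hpredense hlab hsupp
end
end
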